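/- arXiv:1406.3698 — 2 statements merged into one kernel-verified Lean document; each statement's English description precedes it below -/
import Mathlib

section
/- For every integer μ ≥ 2 there exist a constant c > 0 and a positive integer J such that for every prime p and every integer j ≥ J, max{τ(p^j + m) : m ∈ ℕ, 1 ≤ m, (m : ℝ) ≤ (p^j)^(1/μ)} ≥ c · ln(ln j) · τ(p^j). -/
/-!
Choosing `m ≤ 6ᵏ` with `6ᵏ ∣ pʲ + m` gives `τ(pʲ + m) ≥ τ(6ᵏ) = (k + 1)²`, and `6ᵏ ≤ (pʲ)^(1/μ)`
as soon as `3kμ ≤ j`. Taking `k = ⌊j / 3μ⌋` the maximum is of order `j² / μ²`, which dominates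
`ln (ln j) · τ(pʲ) ≤ (j + 1)²`.
-/

def tau (n : ℕ) : ℕ := n.divisors.card

lemma tau_prime_pow {p : ℕ} (hp : p.Prime) (k : ℕ) : tau (p ^ k) = k + 1 := by
  simp [tau, Nat.divisors_prime_pow hp]

lemma tau_six_pow (k : ℕ) : tau (6 ^ k) = (k + 1) ^ 2 := by
  have hcop : (2 ^ k).Coprime (3 ^ k) := Nat.Coprime.pow k k (by decide)
  calc tau (6 ^ k) = tau (2 ^ k) * tau (3 ^ k) := by
        rw [show 6 ^ k = 2 ^ k * 3 ^ k by rw [← Nat.mul_pow]]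
        exact hcop.card_divisors_mul
    _ = (k + 1) ^ 2 := by rw [tau_prime_pow Nat.prime_two, tau_prime_pow Nat.prime_three, sq]

lemma tau_le_tau_of_dvd {d n : ℕ} (h : d ∣ n) (hn : n ≠ 0) : tau d ≤ tau n :=
  Finset.card_le_card (Nat.divisors_subset_of_dvd hn h)

lemma exists_mem_Icc_dvd_add (n : ℕ) {d : ℕ} (hd : 0 < d) : ∃ m ∈ Finset.Icc 1 d, d ∣ n + m := by
  have hmod : n % d < d := Nat.mod_lt n hd
  refine ⟨d - n % d, Finset.mem_Icc.2 ⟨by omega, by omega⟩, n / d + 1, ?_⟩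
  have := Nat.div_add_mod n d
  rw [Nat.mul_add, Nat.mul_one]
  omega

lemma le_floor_rpow_one_div {d N μ : ℕ} (hμ : μ ≠ 0) (h : d ^ μ ≤ N) :
    d ≤ ⌊(N : ℝ) ^ (1 / (μ : ℝ))⌋₊ := by
  refine Nat.le_floor ?_
  calc (d : ℝ) = ((d : ℝ) ^ μ) ^ (1 / (μ : ℝ)) := by
        rw [one_div, Real.pow_rpow_inv_natCast d.cast_nonneg hμ]
    _ ≤ (N : ℝ) ^ (1 / (μ : ℝ)) := by gcongr; exact_mod_cast h

lemma sq_le_sup_tau_add {N k μ : ℕ} (hμ : μ ≠ 0) (h : 6 ^ (k * μ) ≤ N) :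
    (k + 1) ^ 2 ≤ (Finset.Icc 1 ⌊(N : ℝ) ^ (1 / (μ : ℝ))⌋₊).sup (fun m => tau (N + m)) := by
  obtain ⟨m, hm, hdvd⟩ := exists_mem_Icc_dvd_add N (pow_pos (by norm_num : 0 < 6) k)
  have hm' : m ∈ Finset.Icc 1 ⌊(N : ℝ) ^ (1 / (μ : ℝ))⌋₊ := by
    refine Finset.Icc_subset_Icc_right (le_floor_rpow_one_div hμ ?_) hm
    rwa [← pow_mul]
  calc (k + 1) ^ 2 = tau (6 ^ k) := (tau_six_pow k).symm
    _ ≤ tau (N + m) := tau_le_tau_of_dvd hdvd (by have := (Finset.mem_Icc.1 hm).1; omega)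
    _ ≤ _ := Finset.le_sup (f := fun m => tau (N + m)) hm'

lemma six_pow_le_pow {p j n : ℕ} (hp : 2 ≤ p) (hn : 3 * n ≤ j) : 6 ^ n ≤ p ^ j :=
  calc 6 ^ n ≤ 8 ^ n := Nat.pow_le_pow_left (by norm_num) n
    _ = 2 ^ (3 * n) := by rw [pow_mul]; norm_num
    _ ≤ 2 ^ j := Nat.pow_le_pow_right (by norm_num) hn
    _ ≤ p ^ j := Nat.pow_le_pow_left hp j

lemma Real.log_log_le_self {x : ℝ} (hx : 1 ≤ x) : Real.log (Real.log x) ≤ x :=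
  (Real.log_le_self (Real.log_nonneg hx)).trans (Real.log_le_self (by linarith))

/-- For every integer `μ ≥ 2` there are `c > 0` and `J` such that for every prime `p`
and `j ≥ J`, the maximum of `τ (p^j + m)` over `1 ≤ m ≤ (p^j)^(1/μ)` is at least
`c · ln (ln j) · τ (p^j)`. -/
theorem max_tau_ge_loglog (μ : ℕ) (hμ : 2 ≤ μ) :
    ∃ c : ℝ, 0 < c ∧ ∃ J : ℕ, 0 < J ∧ ∀ p j : ℕ, p.Prime → J ≤ j →
      (((Finset.Icc 1 ⌊((p ^ j : ℕ) : ℝ) ^ (1 / (μ : ℝ))⌋₊).sup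
        (fun m => tau (p ^ j + m)) : ℕ) : ℝ)
        ≥ c * Real.log (Real.log j) * (tau (p ^ j) : ℝ) := by
  have hμ0 : μ ≠ 0 := by omega
  refine ⟨1 / (3 * μ : ℝ) ^ 2, by positivity, 1, one_pos, fun p j hp hj => ?_⟩
  set k := j / (3 * μ)
  have hkμ : 3 * (k * μ) ≤ j :=
    calc 3 * (k * μ) = k * (3 * μ) := by ring
      _ ≤ j := Nat.div_mul_le_self j _
  have hsup := sq_le_sup_tau_add (N := p ^ j) hμ0 (six_pow_le_pow hp.two_le hkμ)
  have hjk : j + 1 ≤ 3 * μ * (k + 1) :=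
    calc j + 1 ≤ k * (3 * μ) + 3 * μ := Nat.lt_div_mul_add (by omega)
      _ = 3 * μ * (k + 1) := by ring
  have hloglog : Real.log (Real.log j) ≤ j + 1 := by
    linarith [Real.log_log_le_self (x := j) (by exact_mod_cast hj)]
  rw [tau_prime_pow hp, ge_iff_le]
  have h3μ : (3 * μ : ℝ) ^ 2 ≠ 0 := by positivity
  calc 1 / (3 * μ : ℝ) ^ 2 * Real.log (Real.log j) * ((j + 1 : ℕ) : ℝ)
      ≤ 1 / (3 * μ : ℝ) ^ 2 * ((j : ℝ) + 1) ^ 2 := by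
        rw [mul_assoc, sq ((j : ℝ) + 1), Nat.cast_succ]
        gcongr
    _ ≤ 1 / (3 * μ : ℝ) ^ 2 * ((3 * μ) ^ 2 * (k + 1) ^ 2) := by
        rw [← mul_pow]
        gcongr
        exact_mod_cast hjk
    _ = ((k + 1) ^ 2 : ℕ) := by
        rw [← mul_assoc, one_div_mul_cancel h3μ, one_mul]
        norm_cast
    _ ≤ _ := by exact_mod_cast hsup
end

section
/- For every integer μ ≥ 2 there exist a constant c > 0 and a positive integer M such that for every integer m ≥ M, ∑_{l=(μ−1)m}^{μm−1} ( Δ(l!) − Δ(((μ−1)m − 1)!) ) ≥ c · m² · ln(ln m). -/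
/-!
Since `i! j!` divides `(i + j)!`, each summand `Ω(l!) - Ω(j!)` with `l ≥ j + m/2` is at least
`Ω((m/2)!)`, so the sum is at least `(m/2) Ω((m/2)!)`. Legendre's formula gives
`Ω(n!) ≥ ∑_{p ≤ n} ⌊n/p⌋ ≥ n ∑_{p ≤ n} 1/p - n`, and Abel summation against Chebyshev's bound
`π(n) ≥ n / (2 log n)` gives `∑_{p ≤ n} 1/p ≥ (log log n) / 4 - O(1)`.
-/

/-- `Δ n = Ω n` is the number of prime factors of `n` counted with multiplicity. -/
def Delta (n : ℕ) : ℕ := n.primeFactorsList.length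

open Finset Filter Real
open scoped Nat Nat.Prime ArithmeticFunction.Omega

lemma Delta_eq_cardFactors (n : ℕ) : Delta n = Ω n := rfl

lemma cardFactors_le_of_dvd {a b : ℕ} (hab : a ∣ b) (hb : b ≠ 0) : Ω a ≤ Ω b :=
  (Nat.primeFactorsList_sublist_of_dvd hab hb).length_le

lemma div_le_factorization_factorial {n p : ℕ} (hp : p.Prime) (hpn : p ≤ n) :
    n / p ≤ (n !).factorization p := by
  rw [Nat.factorization_factorial hp (Nat.lt_succ_self (Nat.log p n))]
  have h1 : 1 ∈ Ico 1 (Nat.log p n + 1) := by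
    simpa using Nat.log_pos hp.one_lt hpn
  simpa using single_le_sum (f := fun i => n / p ^ i) (fun _ _ => Nat.zero_le _) h1

lemma sum_primesLE_div_le_cardFactors_factorial (n : ℕ) :
    ∑ p ∈ Nat.primesLE n, n / p ≤ Ω n ! := by
  rw [ArithmeticFunction.cardFactors_eq_sum_factorization, Finsupp.sum, Nat.support_factorization]
  calc ∑ p ∈ Nat.primesLE n, n / p
      ≤ ∑ p ∈ Nat.primesLE n, (n !).factorization p :=
        sum_le_sum fun p hp => div_le_factorization_factorial (Nat.prime_of_mem_primesLE hp)
          (Nat.le_of_mem_primesLE hp)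
    _ ≤ ∑ p ∈ (n !).primeFactors, (n !).factorization p := by
        refine sum_le_sum_of_subset fun p hp => ?_
        have hp' := Nat.mem_primesLE.1 hp
        exact Nat.mem_primeFactors.2 ⟨hp'.2, (hp'.2.dvd_factorial).2 hp'.1, Nat.factorial_ne_zero n⟩

lemma mul_sum_primesLE_one_div_sub_le_cardFactors_factorial (n : ℕ) :
    n * ∑ p ∈ Nat.primesLE n, (1 : ℝ) / p - n ≤ Ω n ! := by
  have hπ : (Nat.primesLE n).card ≤ n := by
    calc (Nat.primesLE n).card ≤ (Icc 1 n).card := by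
          rw [Nat.primesLE_eq_filter_Icc_one]; exact card_filter_le _ _
      _ = n := by simp
  calc n * ∑ p ∈ Nat.primesLE n, (1 : ℝ) / p - n
      ≤ ∑ p ∈ Nat.primesLE n, ((n : ℝ) / p - 1) := by
        rw [sum_sub_distrib, mul_sum, sum_const, nsmul_one]
        simp only [mul_one_div]
        gcongr
    _ ≤ ∑ p ∈ Nat.primesLE n, ((n / p : ℕ) : ℝ) := by
        gcongr with p
        rw [← Nat.floor_div_eq_div (K := ℝ)]
        exact (Nat.sub_one_lt_floor _).le
    _ ≤ Ω n ! := by exact_mod_cast sum_primesLE_div_le_cardFactors_factorial n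

lemma sum_primeCounting_div_le_sum_primesLE (x : ℕ) :
    ∑ n ∈ Icc 1 x, (π n : ℝ) / (n * (n + 1)) ≤ ∑ p ∈ Nat.primesLE x, (1 : ℝ) / p := by
  have htelescope : ∀ p ∈ Nat.primesLE x,
      ∑ n ∈ Icc p x, ((1 : ℝ) / n - 1 / (n + 1)) = 1 / p - 1 / (x + 1) := by
    intro p hp
    have := sum_Icc_sub (f := fun n : ℕ => -(1 : ℝ) / n) (Nat.le_of_mem_primesLE hp)
    push_cast at this
    rw [show (1 : ℝ) / p - 1 / (x + 1) = -1 / (x + 1) - -1 / p by ring, ← this]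
    refine sum_congr rfl fun n _ => ?_
    ring
  calc ∑ n ∈ Icc 1 x, (π n : ℝ) / (n * (n + 1))
      = ∑ n ∈ Icc 1 x, ∑ p ∈ Nat.primesLE n, ((1 : ℝ) / n - 1 / (n + 1)) := by
        refine sum_congr rfl fun n hn => ?_
        have hn : (n : ℝ) ≠ 0 := by have := (mem_Icc.1 hn).1; positivity
        rw [sum_const, Nat.primesLE_card_eq_primeCounting, nsmul_eq_mul]
        field_simp
        ring
    _ = ∑ p ∈ Nat.primesLE x, ∑ n ∈ Icc p x, ((1 : ℝ) / n - 1 / (n + 1)) := by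
        refine sum_comm' fun n p => ?_
        simp only [mem_Icc, Nat.mem_primesLE]
        constructor
        · rintro ⟨⟨-, hnx⟩, hpn, hp⟩
          exact ⟨⟨hpn, hnx⟩, hpn.trans hnx, hp⟩
        · rintro ⟨⟨hpn, hnx⟩, -, hp⟩
          exact ⟨⟨hp.one_le.trans hpn, hnx⟩, hpn, hp⟩
    _ ≤ ∑ p ∈ Nat.primesLE x, (1 : ℝ) / p := by
        refine sum_le_sum fun p hp => ?_
        rw [htelescope p hp]
        have : (0 : ℝ) ≤ 1 / (x + 1) := by positivity
        linarith

lemma log_log_add_one_sub_le {x : ℝ} (hx : 1 < x) :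
    log (log (x + 1)) - log (log x) ≤ 1 / (x * log x) := by
  have hx0 : 0 < x := by linarith
  have hlogx : 0 < log x := log_pos hx
  have hlog_succ : log (x + 1) - log x ≤ 1 / x := by
    rw [← log_div (by linarith) hx0.ne']
    have := log_le_sub_one_of_pos (show 0 < (x + 1) / x by positivity)
    have heq : (x + 1) / x - 1 = 1 / x := by field_simp; ring
    linarith
  have hlogx1 : 0 < log (x + 1) := log_pos (by linarith)
  rw [← log_div hlogx1.ne' hlogx.ne']
  calc log (log (x + 1) / log x) ≤ log (x + 1) / log x - 1 :=
        log_le_sub_one_of_pos (by positivity)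
    _ = (log (x + 1) - log x) / log x := by field_simp
    _ ≤ 1 / x / log x := by gcongr
    _ = 1 / (x * log x) := by rw [div_div]

lemma eventually_div_two_mul_log_le_primeCounting :
    ∀ᶠ n : ℕ in atTop, (n : ℝ) / (2 * log n) ≤ π n := by
  have hsucc : Tendsto (fun n : ℕ => (n : ℝ) + 1) atTop atTop :=
    tendsto_natCast_atTop_atTop.atTop_add tendsto_const_nhds
  filter_upwards [hsucc.eventually (isLittleO_log_id_atTop.bound (by norm_num : (0 : ℝ) < 1 / 8)),
    eventually_ge_atTop 3] with n hlog hn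
  have hn' : (3 : ℝ) ≤ n := by exact_mod_cast hn
  have hlogn : 0 < log n := log_pos (by linarith)
  have hlog1 : log (n + 1) ≤ (n + 1) / 8 := by
    have h0 : 0 ≤ log (n + 1) := log_nonneg (by linarith)
    rw [norm_of_nonneg h0, id, norm_of_nonneg (by positivity)] at hlog
    linarith
  have hlog2 := log_two_gt_d9
  -- `log 2 - 1 / 8 > 1 / 2` leaves room for the `+ 1` in `log (n + 1) ≤ (n + 1) / 8`.
  calc (n : ℝ) / (2 * log n) = (n / 2) / log n := by rw [div_div]
    _ ≤ (n * log 2 - log (n + 1)) / log n := by gcongr; nlinarith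
    _ ≤ π n := Chebyshev.pi_ge n

lemma exists_log_log_div_four_sub_le_sum_primesLE :
    ∃ C, ∀ᶠ x : ℕ in atTop, log (log x) / 4 - C ≤ ∑ p ∈ Nat.primesLE x, (1 : ℝ) / p := by
  obtain ⟨N, hN⟩ := eventually_atTop.1 eventually_div_two_mul_log_le_primeCounting
  refine ⟨log (log ((max N 2 : ℕ) : ℝ)) / 4, eventually_atTop.2 ⟨max N 2, fun x hx => ?_⟩⟩
  have hterm : ∀ n ∈ Ico (max N 2) x,
      (log (log ((n + 1 : ℕ) : ℝ)) - log (log n)) / 4 ≤ (π n : ℝ) / (n * (n + 1)) := by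
    intro n hn
    have hn2 : 2 ≤ n := le_of_max_le_right (mem_Ico.1 hn).1
    have hn' : (2 : ℝ) ≤ n := by exact_mod_cast hn2
    have hlogn : 0 < log n := log_pos (by linarith)
    calc (log (log ((n + 1 : ℕ) : ℝ)) - log (log n)) / 4 ≤ 1 / (n * log n) / 4 := by
          push_cast; gcongr; exact log_log_add_one_sub_le (by linarith)
      _ ≤ (n / (2 * log n)) / (n * (n + 1)) := by
          rw [div_le_div_iff₀ (by positivity) (by positivity)]
          field_simp
          nlinarith
      _ ≤ (π n : ℝ) / (n * (n + 1)) := by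
          gcongr; exact hN n (le_of_max_le_left (mem_Ico.1 hn).1)
  calc log (log x) / 4 - log (log (max N 2 : ℕ)) / 4
      = ∑ n ∈ Ico (max N 2) x, (log (log ((n + 1 : ℕ) : ℝ)) - log (log n)) / 4 := by
        rw [← sum_div, sum_Ico_sub (f := fun n : ℕ => log (log n)) hx, sub_div]
    _ ≤ ∑ n ∈ Ico (max N 2) x, (π n : ℝ) / (n * (n + 1)) := sum_le_sum hterm
    _ ≤ ∑ n ∈ Icc 1 x, (π n : ℝ) / (n * (n + 1)) := by
        refine sum_le_sum_of_subset_of_nonneg (fun n hn => ?_) fun _ _ _ => by positivity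
        have := mem_Ico.1 hn
        exact mem_Icc.2 ⟨by omega, by omega⟩
    _ ≤ _ := sum_primeCounting_div_le_sum_primesLE x

lemma exists_mul_log_log_div_four_sub_le_cardFactors_factorial :
    ∃ C, ∀ᶠ n : ℕ in atTop, n * (log (log n) / 4 - C) ≤ Ω n ! := by
  obtain ⟨C, hC⟩ := exists_log_log_div_four_sub_le_sum_primesLE
  refine ⟨C + 1, hC.mono fun n hn => ?_⟩
  calc (n : ℝ) * (log (log n) / 4 - (C + 1))
      ≤ n * ∑ p ∈ Nat.primesLE n, (1 : ℝ) / p - n := by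
        have : (n : ℝ) * (log (log n) / 4 - C) ≤ n * ∑ p ∈ Nat.primesLE n, (1 : ℝ) / p := by
          gcongr
        linarith
    _ ≤ Ω n ! := mul_sum_primesLE_one_div_sub_le_cardFactors_factorial n

lemma cardFactors_factorial_add_le {i j l : ℕ} (h : i + j ≤ l) : Ω i ! + Ω j ! ≤ Ω l ! := by
  rw [← ArithmeticFunction.cardFactors_mul (Nat.factorial_ne_zero i) (Nat.factorial_ne_zero j)]
  exact cardFactors_le_of_dvd
    ((Nat.factorial_mul_factorial_dvd_factorial_add i j).trans (Nat.factorial_dvd_factorial h))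
    (Nat.factorial_ne_zero l)

lemma card_mul_cardFactors_factorial_le_sum (j m k : ℕ) (hk : 1 ≤ k) :
    ((m + 1 - k : ℕ) : ℝ) * Ω k ! ≤ ∑ l ∈ Icc (j + 1) (j + m), ((Ω l ! : ℝ) - Ω j !) := by
  have hdiff : ∀ {i l}, j + i ≤ l → (Ω i ! : ℝ) ≤ Ω l ! - Ω j ! := fun hl => by
    have := cardFactors_factorial_add_le hl
    rw [le_sub_iff_add_le']
    exact_mod_cast this
  calc ((m + 1 - k : ℕ) : ℝ) * Ω k ! = ∑ l ∈ Icc (j + k) (j + m), (Ω k ! : ℝ) := by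
        rw [sum_const, nsmul_eq_mul, Nat.card_Icc]
        congr 2
        omega
    _ ≤ ∑ l ∈ Icc (j + k) (j + m), ((Ω l ! : ℝ) - Ω j !) :=
        sum_le_sum fun l hl => hdiff (mem_Icc.1 hl).1
    _ ≤ ∑ l ∈ Icc (j + 1) (j + m), ((Ω l ! : ℝ) - Ω j !) := by
        refine sum_le_sum_of_subset_of_nonneg (Icc_subset_Icc_left (by omega)) fun l hl _ => ?_
        simpa using hdiff (i := 0) (by have := (mem_Icc.1 hl).1; omega)

lemma log_log_sub_one_le_log_log_div_two {m : ℕ} (hm : 6 ≤ m) :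
    log (log m) - 1 ≤ log (log (m / 2 : ℕ)) := by
  have hsq : m ≤ (m / 2) ^ 2 := by
    have : 3 ≤ m / 2 := by omega
    nlinarith [Nat.div_add_mod m 2, Nat.mod_lt m two_pos]
  have hm' : (1 : ℝ) < m := by exact_mod_cast (by omega : 1 < m)
  have hhalf : (0 : ℝ) < (m / 2 : ℕ) := by exact_mod_cast (by omega : 0 < m / 2)
  have hlog : log m / 2 ≤ log (m / 2 : ℕ) := by
    have := log_le_log (by positivity) (show (m : ℝ) ≤ ((m / 2 : ℕ) : ℝ) ^ 2 by exact_mod_cast hsq)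
    rw [log_pow] at this
    push_cast at this
    linarith
  have hlog2 : log 2 ≤ 1 := by linarith [log_two_lt_d9]
  calc log (log m) - 1 ≤ log (log m) - log 2 := by linarith
    _ = log (log m / 2) := (log_div (log_pos hm').ne' two_ne_zero).symm
    _ ≤ log (log (m / 2 : ℕ)) := log_le_log (by have := log_pos hm'; positivity) hlog

lemma eventually_sq_mul_log_log_le_sum_cardFactors_factorial_sub :
    ∀ᶠ m : ℕ in atTop, ∀ j : ℕ,
      (m : ℝ) ^ 2 * log (log m) / 64 ≤ ∑ l ∈ Icc (j + 1) (j + m), ((Ω l ! : ℝ) - Ω j !) := by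
  obtain ⟨C, hC⟩ := exists_mul_log_log_div_four_sub_le_cardFactors_factorial
  have hloglog : Tendsto (fun m : ℕ => log (log m)) atTop atTop :=
    tendsto_log_atTop.comp (tendsto_log_atTop.comp tendsto_natCast_atTop_atTop)
  filter_upwards [(Nat.tendsto_div_const_atTop two_ne_zero).eventually hC,
    hloglog.eventually_ge_atTop (max (8 * C + 2) 0), eventually_ge_atTop 6] with m hΩ hL hm6 j
  set k := m / 2
  set L := log (log m)
  have hL' := le_of_max_le_left hL
  have hL0 := le_of_max_le_right hL
  have hk4 : (m : ℝ) / 4 ≤ k := by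
    have : m ≤ 2 * k + 1 := by omega
    have : (m : ℝ) ≤ 2 * k + 1 := by exact_mod_cast this
    have : (6 : ℝ) ≤ m := by exact_mod_cast hm6
    linarith
  have hcard : (m : ℝ) / 2 ≤ ((m + 1 - k : ℕ) : ℝ) := by
    have : k ≤ m := Nat.div_le_self m 2
    rw [Nat.cast_sub (by omega : k ≤ m + 1)]
    push_cast
    have : (2 * k : ℕ) ≤ m := Nat.mul_div_le m 2
    have : (2 : ℝ) * k ≤ m := by exact_mod_cast this
    linarith
  have hfact : (k : ℝ) * (L / 8) ≤ Ω k ! := by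
    have := log_log_sub_one_le_log_log_div_two hm6
    calc (k : ℝ) * (L / 8) ≤ k * (log (log k) / 4 - C) := by
          gcongr
          linarith
      _ ≤ Ω k ! := hΩ
  calc (m : ℝ) ^ 2 * L / 64 = (m / 2) * (m / 4 * (L / 8)) := by ring
    _ ≤ ((m + 1 - k : ℕ) : ℝ) * Ω k ! := by
        gcongr
        exact (mul_le_mul_of_nonneg_right hk4 (by positivity)).trans hfact
    _ ≤ _ := card_mul_cardFactors_factorial_le_sum j m k (by omega)

/-- For every integer `μ ≥ 2` there are `c > 0` and `M` such that for all `m ≥ M`,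
`∑_{l=(μ−1)m}^{μm−1} (Δ(l!) − Δ(((μ−1)m − 1)!)) ≥ c m² ln (ln m)`. -/
theorem sum_Delta_factorial_diff_ge (μ : ℕ) (hμ : 2 ≤ μ) :
    ∃ c : ℝ, 0 < c ∧ ∃ M : ℕ, 0 < M ∧ ∀ m : ℕ, M ≤ m →
      ∑ l ∈ Finset.Icc ((μ - 1) * m) (μ * m - 1),
          ((Delta (Nat.factorial l) : ℝ) -
            (Delta (Nat.factorial ((μ - 1) * m - 1)) : ℝ))
        ≥ c * (m : ℝ) ^ 2 * Real.log (Real.log m) := by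
  obtain ⟨M, hM⟩ := eventually_atTop.1 eventually_sq_mul_log_log_le_sum_cardFactors_factorial_sub
  refine ⟨1 / 64, by norm_num, max M 1, lt_max_of_lt_right one_pos, fun m hm => ?_⟩
  have hm1 : 1 ≤ m := le_of_max_le_right hm
  have hpos : 0 < (μ - 1) * m := Nat.mul_pos (by omega) hm1
  have hμm : μ * m = (μ - 1) * m + m := by
    rw [← Nat.succ_mul, Nat.succ_eq_add_one, Nat.sub_add_cancel (by omega)]
  set j := (μ - 1) * m - 1
  rw [show (μ - 1) * m = j + 1 by omega, show μ * m - 1 = j + m by omega]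
  simp only [Delta_eq_cardFactors, ge_iff_le]
  linarith [hM m (le_of_max_le_left hm) j]
end
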